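/- Let V be a nonzero finite-dimensional real inner product space, let M be a subset of End(V) closed under adjoints, let Z be the commutant of M in End(V), and let π_Z be the projection of End(V) onto Z along Z^⊥. Let S ∈ End(V) be self-adjoint and satisfy Tr(S∘z) = 0 for every z ∈ Z. Then π_Z(exp(S)) is self-adjoint and satisfies ⟨π_Z(exp(S))(v), v⟩ ≥ ⟨v, v⟩ for every v ∈ V; in particular π_Z(exp(S)) is positive definite and has no eigenvalue smaller than 1. -/

import Mathlib

/-!
Write `Z` for the commutant, `E = exp S` and `Q = π_Z E`. As `M` is closed under adjoints, so is
`Z`, and the trace form is definite on `Z` (`Tr(z z†) = 0` forces `z = 0`); hence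
`End(V) = Z ⊕ Z^⊥` and `Q` is the unique element of `Z` with `E - Q ∈ Z^⊥`. Both summands are
closed under adjoints, so `E† = E` gives `Q† = Q`.

For `Q ≥ 1`, let `c` be an eigenvalue of `T = Q - 1 ∈ Z` and `P` the orthogonal projection onto
its eigenspace. That eigenspace is invariant under `M` and `M†`, so `P ∈ Z`, and therefore
`c · dim = Tr(T P) = Tr((E - 1 - S) P) ≥ 0`: the middle equality uses `E - Q ∈ Z^⊥` and
`S ∈ Z^⊥`, the inequality that `E - 1 - S ≥ 0` (as `e^x ≥ 1 + x` on the spectrum of `S`).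
-/

open scoped RealInnerProductSpace

/-- The commutant of a set `M` of continuous endomorphisms of `V`:
all `A ∈ End(V)` commuting with every element of `M`. -/
def setCommutant {V : Type*} [NormedAddCommGroup V] [InnerProductSpace ℝ V]
    [FiniteDimensional ℝ V] (M : Set (V →L[ℝ] V)) : Submodule ℝ (V →L[ℝ] V) where
  carrier := {A | ∀ m ∈ M, A ∘L m = m ∘L A}
  add_mem' := by
    intro a b ha hb m hm
    simp [ContinuousLinearMap.add_comp, ContinuousLinearMap.comp_add, ha m hm, hb m hm]
  zero_mem' := by intro m hm; simp
  smul_mem' := by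
    intro c a ha m hm
    simp [ContinuousLinearMap.smul_comp, ContinuousLinearMap.comp_smulₛₗ, ha m hm]

/-- The orthogonal of a subspace `Z` of `End(V)` with respect to the trace form
`(A, B) ↦ Tr(A ∘ B)`. -/
def traceOrthogonal {V : Type*} [NormedAddCommGroup V] [InnerProductSpace ℝ V]
    [FiniteDimensional ℝ V] (Z : Submodule ℝ (V →L[ℝ] V)) : Submodule ℝ (V →L[ℝ] V) where
  carrier := {A | ∀ z ∈ Z, LinearMap.trace ℝ V (A ∘L z).toLinearMap = 0}
  add_mem' := by
    intro a b ha hb z hz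
    rw [ContinuousLinearMap.add_comp, ContinuousLinearMap.coe_add, map_add,
      ha z hz, hb z hz, add_zero]
  zero_mem' := by intro z hz; simp
  smul_mem' := by
    intro c a ha z hz
    rw [ContinuousLinearMap.smul_comp, ContinuousLinearMap.coe_smul, map_smul,
      ha z hz, smul_zero]

open ContinuousLinearMap Module.End
open scoped ComplexOrder

section Trace

variable {𝕜 E : Type*} [RCLike 𝕜] [NormedAddCommGroup E] [InnerProductSpace 𝕜 E]
  [FiniteDimensional 𝕜 E]

theorem LinearMap.trace_adjoint (f : E →ₗ[𝕜] E) :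
    LinearMap.trace 𝕜 E (LinearMap.adjoint f) = star (LinearMap.trace 𝕜 E f) := by
  let b := stdOrthonormalBasis 𝕜 E
  rw [LinearMap.trace_eq_matrix_trace 𝕜 b.toBasis, LinearMap.trace_eq_matrix_trace 𝕜 b.toBasis,
    LinearMap.toMatrix_adjoint, Matrix.trace_conjTranspose]

theorem LinearMap.IsPositive.trace_eq_zero_iff {f : E →ₗ[𝕜] E} (hf : f.IsPositive) :
    LinearMap.trace 𝕜 E f = 0 ↔ f = 0 := by
  let b := stdOrthonormalBasis 𝕜 E
  rw [LinearMap.trace_eq_matrix_trace 𝕜 b.toBasis,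
    ((LinearMap.posSemidef_toMatrix_iff b).mpr hf).trace_eq_zero_iff, LinearEquiv.map_eq_zero_iff]

theorem ContinuousLinearMap.trace_comp_comm (A B : E →L[𝕜] E) :
    LinearMap.trace 𝕜 E (A ∘L B).toLinearMap = LinearMap.trace 𝕜 E (B ∘L A).toLinearMap := by
  rw [toLinearMap_comp, toLinearMap_comp, LinearMap.trace_comp_comm']

theorem Submodule.trace_starProjection (U : Submodule 𝕜 E) :
    LinearMap.trace 𝕜 E U.starProjection = Module.finrank 𝕜 U := by
  have := (LinearMap.IsIdempotentElem.isProj_range _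
    U.isIdempotentElem_starProjection.toLinearMap).trace
  rwa [range_starProjection] at this

theorem ContinuousLinearMap.IsPositive.trace_comp_starProjection_nonneg {A : E →L[𝕜] E}
    (hA : A.IsPositive) (U : Submodule 𝕜 E) :
    0 ≤ LinearMap.trace 𝕜 E (A ∘L U.starProjection).toLinearMap := by
  calc (0 : 𝕜) ≤ LinearMap.trace 𝕜 E (U.starProjection ∘L A ∘L U.starProjection).toLinearMap :=
        ((isPositive_toLinearMap_iff _).mpr (hA.conj_starProjection U)).trace_nonneg
    _ = LinearMap.trace 𝕜 E (A ∘L U.starProjection).toLinearMap := by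
        rw [toLinearMap_comp, LinearMap.trace_comp_comm', ← toLinearMap_comp, comp_assoc,
          ← mul_def U.starProjection, U.isIdempotentElem_starProjection.eq]

end Trace

theorem exp_apply_of_apply_eq_smul {𝕜 E : Type*} [RCLike 𝕜] [NormedAddCommGroup E]
    [NormedSpace 𝕜 E] [CompleteSpace E] {S : E →L[𝕜] E} {v : E} {c : 𝕜} (h : S v = c • v) :
    NormedSpace.exp S v = NormedSpace.exp c • v := by
  have hpow (n : ℕ) : (S ^ n) v = c ^ n • v := by
    induction n with
    | zero => simp
    | succ n ih =>
      rw [pow_succ, mul_apply_eq_comp, h, map_smul, ih, smul_smul, mul_comm, ← pow_succ]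
  refine ((NormedSpace.exp_series_hasSum_exp' (𝕂 := 𝕜) S).mapL (apply 𝕜 E v)).unique ?_
  simpa [hpow, smul_smul] using (NormedSpace.exp_series_hasSum_exp' (𝕂 := 𝕜) c).smul_const v

section TraceForm

variable {V : Type*} [NormedAddCommGroup V] [InnerProductSpace ℝ V]

variable (V) in
noncomputable def traceForm : LinearMap.BilinForm ℝ (V →L[ℝ] V) :=
  (LinearMap.mul ℝ (V →L[ℝ] V)).compr₂ (LinearMap.trace ℝ V ∘ₗ coeLM ℝ)

theorem traceForm_apply (A B : V →L[ℝ] V) :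
    traceForm V A B = LinearMap.trace ℝ V (A ∘L B).toLinearMap :=
  rfl

variable [FiniteDimensional ℝ V]

theorem ContinuousLinearMap.trace_adjoint (A : V →L[ℝ] V) :
    LinearMap.trace ℝ V (adjoint A).toLinearMap = LinearMap.trace ℝ V A.toLinearMap := by
  rw [← adjoint_toLinearMap, LinearMap.trace_adjoint, star_trivial]

theorem adjoint_mem_traceOrthogonal {Z : Submodule ℝ (V →L[ℝ] V)}
    (hZ : ∀ z ∈ Z, adjoint z ∈ Z) {A : V →L[ℝ] V} (hA : A ∈ traceOrthogonal Z) :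
    adjoint A ∈ traceOrthogonal Z := by
  intro z hz
  rw [← trace_adjoint, adjoint_comp, adjoint_adjoint, trace_comp_comm]
  exact hA _ (hZ z hz)

theorem traceForm_isRefl : (traceForm V).IsRefl := fun A B h => by
  rwa [traceForm_apply, trace_comp_comm]

theorem traceForm_orthogonal (Z : Submodule ℝ (V →L[ℝ] V)) :
    (traceForm V).orthogonal Z = traceOrthogonal Z := by
  ext A
  refine forall₂_congr fun z _ => ?_
  rw [traceForm_apply, trace_comp_comm]

theorem isCompl_traceOrthogonal {Z : Submodule ℝ (V →L[ℝ] V)}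
    (hZ : ∀ z ∈ Z, adjoint z ∈ Z) : IsCompl Z (traceOrthogonal Z) := by
  rw [← traceForm_orthogonal]
  refine LinearMap.BilinForm.isCompl_orthogonal_of_restrict_nondegenerate traceForm_isRefl
    (.ofSeparatingLeft fun z hz => ?_)
  -- `z ∘ z†` is positive, and its trace vanishes because `z† ∈ Z`
  have hzz : (z : V →L[ℝ] V) ∘L adjoint (z : V →L[ℝ] V) = 0 := by
    have h := (isPositive_self_comp_adjoint (z : V →L[ℝ] V)).toLinearMap.trace_eq_zero_iff.mp
      (hz ⟨_, hZ z z.2⟩)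
    exact coe_injective h
  have hz' : adjoint (z : V →L[ℝ] V) = 0 := by
    rwa [← adjoint_comp_self_eq_zero_iff, adjoint_adjoint]
  simpa using hz'

end TraceForm

section Projection

variable {R N : Type*} [Ring R] [AddCommGroup N] [Module R N] {p q : Submodule R N}
  {π : N →ₗ[R] N} (hp : ∀ x ∈ p, π x = x) (hq : ∀ x ∈ q, π x = 0)
include hp hq

theorem LinearMap.sub_apply_mem_of_isCompl (h : IsCompl p q) (x : N) : x - π x ∈ q := by
  obtain ⟨y, hy, z, hz, rfl⟩ := Submodule.mem_sup.mp (h.sup_eq_top ▸ Submodule.mem_top (x := x))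
  rwa [map_add, hp y hy, hq z hz, add_zero, add_sub_cancel_left]

theorem LinearMap.apply_eq_of_mem_of_sub_mem {x y : N} (hy : y ∈ p) (hxy : x - y ∈ q) :
    π x = y := by
  rw [← sub_add_cancel x y, map_add, hq _ hxy, hp y hy, zero_add]

end Projection

section Commutant

variable {V : Type*} [NormedAddCommGroup V] [InnerProductSpace ℝ V] [FiniteDimensional ℝ V]
  {M : Set (V →L[ℝ] V)}

theorem one_mem_setCommutant : 1 ∈ setCommutant M := fun m _ => by
  rw [← mul_def, ← mul_def, one_mul, mul_one]

theorem adjoint_mem_setCommutant (hM : ∀ m ∈ M, adjoint m ∈ M) {z : V →L[ℝ] V}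
    (hz : z ∈ setCommutant M) : adjoint z ∈ setCommutant M := fun m hm => by
  simpa [adjoint_comp] using (congrArg adjoint (hz _ (hM m hm))).symm

theorem starProjection_mem_setCommutant (hM : ∀ m ∈ M, adjoint m ∈ M) {U : Submodule ℝ V}
    (hU : ∀ m ∈ M, U ∈ invtSubmodule (m : V →ₗ[ℝ] V)) : U.starProjection ∈ setCommutant M :=
  fun m hm => (U.isIdempotentElem_starProjection.commute_iff.mpr
    ⟨by simpa using hU m hm, by simpa using orthogonal_mem_invtSubmodule (hU _ (hM m hm))⟩).eq

theorem starProjection_eigenspace_mem_setCommutant (hM : ∀ m ∈ M, adjoint m ∈ M)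
    {T : V →L[ℝ] V} (hT : T ∈ setCommutant M) (c : ℝ) :
    (eigenspace (T : V →ₗ[ℝ] V) c).starProjection ∈ setCommutant M :=
  starProjection_mem_setCommutant hM fun m hm => (mem_invtSubmodule _).mpr
    (mapsTo_genEigenspace_of_comm (congrArg toLinearMap (hT m hm)) c 1)

end Commutant

section Spectral

variable {V : Type*} [NormedAddCommGroup V] [InnerProductSpace ℝ V]

theorem ContinuousLinearMap.isPositive_of_apply_orthonormalBasis {ι : Type*} [Fintype ι]
    (b : OrthonormalBasis ι ℝ V) {A : V →L[ℝ] V} {c : ι → ℝ} (hc : ∀ i, 0 ≤ c i)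
    (hA : ∀ i, A (b i) = c i • b i) : A.IsPositive := by
  have hA' : A = ∑ i, c i • InnerProductSpace.rankOne ℝ (b i) (b i) := by
    classical
    refine coe_injective (b.toBasis.ext fun i => ?_)
    simp [hA, InnerProductSpace.rankOne_apply, orthonormal_iff_ite.mp b.orthonormal]
  rw [hA']
  exact isPositive_sum _ fun i _ =>
    (InnerProductSpace.isPositive_rankOne_self _).smul_of_nonneg (hc i)

variable [FiniteDimensional ℝ V]

theorem ContinuousLinearMap.isPositive_of_hasEigenvalue_nonneg {T : V →L[ℝ] V}
    (hT : IsSelfAdjoint T) (h : ∀ c, HasEigenvalue (T : V →ₗ[ℝ] V) c → 0 ≤ c) : T.IsPositive :=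
  isPositive_of_apply_orthonormalBasis (hT.isSymmetric.eigenvectorBasis rfl)
    (fun i => h _ (hT.isSymmetric.hasEigenvalue_eigenvalues rfl i))
    (hT.isSymmetric.apply_eigenvectorBasis rfl)

theorem ContinuousLinearMap.isPositive_exp_sub_one_sub {S : V →L[ℝ] V} (hS : IsSelfAdjoint S) :
    (NormedSpace.exp S - 1 - S).IsPositive := by
  let b := hS.isSymmetric.eigenvectorBasis rfl
  let μ := hS.isSymmetric.eigenvalues rfl
  have hSb (i) : S (b i) = μ i • b i := hS.isSymmetric.apply_eigenvectorBasis rfl i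
  refine isPositive_of_apply_orthonormalBasis b (c := fun i => Real.exp (μ i) - 1 - μ i)
    (fun i => by linarith [Real.add_one_le_exp (μ i)]) fun i => ?_
  simp [exp_apply_of_apply_eq_smul (hSb i), hSb i, sub_smul, Real.exp_eq_exp_ℝ]

end Spectral

section ProjCommutant

variable {V : Type*} [NormedAddCommGroup V] [InnerProductSpace ℝ V] [FiniteDimensional ℝ V]
  {M : Set (V →L[ℝ] V)} (hM : ∀ m ∈ M, adjoint m ∈ M) {πZ : (V →L[ℝ] V) →ₗ[ℝ] (V →L[ℝ] V)}
  (hπZmem : ∀ A, πZ A ∈ setCommutant M) (hπZid : ∀ A ∈ setCommutant M, πZ A = A)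
  (hπZzero : ∀ A ∈ traceOrthogonal (setCommutant M), πZ A = 0)
include hM hπZid hπZzero

theorem sub_proj_mem_traceOrthogonal (A : V →L[ℝ] V) :
    A - πZ A ∈ traceOrthogonal (setCommutant M) :=
  LinearMap.sub_apply_mem_of_isCompl hπZid hπZzero
    (isCompl_traceOrthogonal fun _ => adjoint_mem_setCommutant hM) A

theorem trace_proj_comp_of_mem_setCommutant (A : V →L[ℝ] V) {z : V →L[ℝ] V}
    (hz : z ∈ setCommutant M) :
    LinearMap.trace ℝ V (πZ A ∘L z).toLinearMap = LinearMap.trace ℝ V (A ∘L z).toLinearMap := by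
  have h := sub_proj_mem_traceOrthogonal hM hπZid hπZzero A z hz
  rw [sub_comp, toLinearMap_sub, map_sub, sub_eq_zero] at h
  exact h.symm

include hπZmem

theorem IsSelfAdjoint.proj {A : V →L[ℝ] V} (hA : IsSelfAdjoint A) : IsSelfAdjoint (πZ A) := by
  -- `(π A)†` lies in `Z`, and `A - (π A)† = (A - π A)†` is trace-orthogonal to `Z`
  refine isSelfAdjoint_iff'.mpr (LinearMap.apply_eq_of_mem_of_sub_mem hπZid hπZzero
    (adjoint_mem_setCommutant hM (hπZmem A)) ?_).symm
  have h := adjoint_mem_traceOrthogonal (fun _ => adjoint_mem_setCommutant hM)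
    (sub_proj_mem_traceOrthogonal hM hπZid hπZzero A)
  rwa [map_sub, isSelfAdjoint_iff'.mp hA] at h

theorem isPositive_proj_exp_sub_one {S : V →L[ℝ] V} (hS : IsSelfAdjoint S)
    (hSZ : ∀ z ∈ setCommutant M, LinearMap.trace ℝ V (S ∘L z).toLinearMap = 0) :
    (πZ (NormedSpace.exp S) - 1).IsPositive := by
  set T := πZ (NormedSpace.exp S) - 1
  have hTZ : T ∈ setCommutant M := sub_mem (hπZmem _) one_mem_setCommutant
  have hTsa : IsSelfAdjoint T := (hS.exp.proj hM hπZmem hπZid hπZzero).sub (.one _)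
  refine isPositive_of_hasEigenvalue_nonneg hTsa fun c hc => ?_
  set U := eigenspace (T : V →ₗ[ℝ] V) c
  have hPZ : U.starProjection ∈ setCommutant M :=
    starProjection_eigenspace_mem_setCommutant hM hTZ c
  have hTP : T ∘L U.starProjection = c • U.starProjection := by
    ext v
    exact mem_eigenspace_iff.mp (U.starProjection_apply_mem v)
  have htr : LinearMap.trace ℝ V (T ∘L U.starProjection).toLinearMap =
      LinearMap.trace ℝ V ((NormedSpace.exp S - 1 - S) ∘L U.starProjection).toLinearMap := by
    simp only [T, sub_comp, toLinearMap_sub, map_sub, hSZ _ hPZ, sub_zero,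
      trace_proj_comp_of_mem_setCommutant hM hπZid hπZzero _ hPZ]
  have hnonneg := (isPositive_exp_sub_one_sub hS).trace_comp_starProjection_nonneg U
  rw [← htr, hTP, toLinearMap_smul, map_smul, U.trace_starProjection, smul_eq_mul] at hnonneg
  have hpos : 0 < (Module.finrank ℝ U : ℝ) := Nat.cast_pos.mpr <|
    Nat.pos_of_ne_zero fun h => hasEigenvalue_iff.mp hc (Submodule.finrank_eq_zero.mp h)
  exact nonneg_of_mul_nonneg_left hnonneg hpos

end ProjCommutant

theorem proj_commutant_exp_selfAdjoint_expanding_general {V : Type*} [NormedAddCommGroup V]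
    [InnerProductSpace ℝ V] [FiniteDimensional ℝ V]
    (M : Set (V →L[ℝ] V))
    (hM : ∀ m ∈ M, ContinuousLinearMap.adjoint m ∈ M)
    (πZ : (V →L[ℝ] V) →ₗ[ℝ] (V →L[ℝ] V))
    (hπZmem : ∀ A, πZ A ∈ setCommutant M)
    (hπZid : ∀ A ∈ setCommutant M, πZ A = A)
    (hπZzero : ∀ A ∈ traceOrthogonal (setCommutant M), πZ A = 0)
    (S : V →L[ℝ] V) (hS : ContinuousLinearMap.adjoint S = S)
    (hSZ : ∀ z ∈ setCommutant M, LinearMap.trace ℝ V (S ∘L z).toLinearMap = 0) :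
    ContinuousLinearMap.adjoint (πZ (NormedSpace.exp S)) = πZ (NormedSpace.exp S) ∧
    (∀ v : V, ⟪(πZ (NormedSpace.exp S)) v, v⟫ ≥ ⟪v, v⟫) ∧
    (∀ v : V, v ≠ 0 → 0 < ⟪(πZ (NormedSpace.exp S)) v, v⟫) ∧
    (∀ μ : ℝ, Module.End.HasEigenvalue (πZ (NormedSpace.exp S)).toLinearMap μ → 1 ≤ μ) := by
  have hS' : IsSelfAdjoint S := isSelfAdjoint_iff'.mpr hS
  have hexpanding (v : V) : ⟪v, v⟫ ≤ ⟪πZ (NormedSpace.exp S) v, v⟫ := by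
    have h := (isPositive_proj_exp_sub_one hM hπZmem hπZid hπZzero hS' hSZ).inner_nonneg_left v
    rwa [sub_apply, one_apply_eq_self, inner_sub_left, sub_nonneg] at h
  refine ⟨isSelfAdjoint_iff'.mp (hS'.exp.proj hM hπZmem hπZid hπZzero), hexpanding,
    fun v hv => (real_inner_self_pos.mpr hv).trans_le (hexpanding v), fun μ hμ => ?_⟩
  obtain ⟨v, hv⟩ := hμ.exists_hasEigenvector
  have h := hexpanding v
  rw [← coe_coe, hv.apply_eq_smul, real_inner_smul_left] at h
  exact le_of_mul_le_mul_right (by simpa using h) (real_inner_self_pos.mpr hv.2)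

/-- **The projection of `exp(S)` on the commutant is self-adjoint with eigenvalues `≥ 1`.**
Let `M ⊆ End(V)` be closed under adjoints, `Z` its commutant and `π_Z` the projection of
`End(V)` onto `Z` along the trace-form orthogonal `Z^⊥`.  If `S` is self-adjoint and
trace-orthogonal to `Z`, then `π_Z(exp S)` is self-adjoint and satisfies
`⟪π_Z(exp S) v, v⟫ ≥ ⟪v, v⟫` for all `v`; in particular it is positive definite and
has no eigenvalue smaller than `1`. -/
theorem proj_commutant_exp_selfAdjoint_expanding {V : Type*} [NormedAddCommGroup V]
    [InnerProductSpace ℝ V] [FiniteDimensional ℝ V] [Nontrivial V]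
    (M : Set (V →L[ℝ] V))
    (hM : ∀ m ∈ M, ContinuousLinearMap.adjoint m ∈ M)
    (πZ : (V →L[ℝ] V) →ₗ[ℝ] (V →L[ℝ] V))
    (hπZmem : ∀ A, πZ A ∈ setCommutant M)
    (hπZid : ∀ A ∈ setCommutant M, πZ A = A)
    (hπZzero : ∀ A ∈ traceOrthogonal (setCommutant M), πZ A = 0)
    (S : V →L[ℝ] V) (hS : ContinuousLinearMap.adjoint S = S)
    (hSZ : ∀ z ∈ setCommutant M, LinearMap.trace ℝ V (S ∘L z).toLinearMap = 0) :
    ContinuousLinearMap.adjoint (πZ (NormedSpace.exp S)) = πZ (NormedSpace.exp S) ∧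
    (∀ v : V, ⟪(πZ (NormedSpace.exp S)) v, v⟫ ≥ ⟪v, v⟫) ∧
    (∀ v : V, v ≠ 0 → 0 < ⟪(πZ (NormedSpace.exp S)) v, v⟫) ∧
    (∀ μ : ℝ, Module.End.HasEigenvalue (πZ (NormedSpace.exp S)).toLinearMap μ → 1 ≤ μ) :=
  proj_commutant_exp_selfAdjoint_expanding_general M hM πZ hπZmem hπZid hπZzero S hS hSZ
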